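/- Let θ : ĝ → g be a central extension of restricted Lie algebras over F with kernel h (so [h,ĝ] = 0 and u^[2]_ĝ = 0 for all u ∈ h), let D_g be a restricted derivation of (g,[2]_g), let D_h : h → h be F-linear, and let s : g → ĝ be a section of θ. Define ψ(x,y) = [s(x),s(y)] + s([x,y]) and ς(x) = s(x)^[2]_ĝ + s(x^[2]_g) (both valued in h), and set Ob_I(x,y) = D_h(ψ(x,y)) + ψ(D_g(x),y) + ψ(x,D_g(y)) and Ob_II(x) = D_h(ς(x)) + ψ(x,D_g(x)). Then (Ob_I, Ob_II) is a 2-cocycle of the restricted Lie algebra (g,[2]_g) with values in the trivial module h: Ob_I is alternating F-bilinear, Ob_II(a·x) = a²·Ob_II(x), Ob_II(x+y) = Ob_II(x) + Ob_II(y) + Ob_I(x,y), and for all x,y,z ∈ g, Ob_I(x,[y,z]) + Ob_I(y,[z,x]) + Ob_I(z,[x,y]) = 0 and Ob_I(x^[2]_g, y) + Ob_I([x,y], x) = 0. -/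

import Mathlib

/-!
Writing `ψ`, `ς` for the bracket and square defects of the section, `(ψ, ς)` is itself a
restricted 2-cocycle with trivial coefficients: since the kernel is central, the Jacobi identity
in `ĝ` gives the cyclic identity for `ψ`, and `[u^[2], v] = [u, [u, v]]` in `ĝ` gives
`ψ(x^[2], y) = ψ([x, y], x)`. Restricted 2-cocycles are stable under post-composition with a
linear map and under the action `(α, β) ↦ (α(D·, ·) + α(·, D·), α(·, D·))` of a restricted
derivation `D`, and `(Ob_I, Ob_II)` is the sum of `D_h ∘ (ψ, ς)` and of `D_g` acting on
`(ψ, ς)`.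
-/

section CharTwo

variable (F : Type*) {M : Type*}

theorem add_self_eq_zero_of_charP_two [Semiring F] [CharP F 2] [AddCommMonoid M] [Module F M]
    (x : M) : x + x = 0 := by
  rw [← two_smul F x, CharTwo.two_eq_zero, zero_smul]

variable [CommRing F] [CharP F 2]

theorem neg_eq_self_of_charP_two [AddCommGroup M] [Module F M] (x : M) : -x = x :=
  neg_eq_of_add_eq_zero_left (add_self_eq_zero_of_charP_two F x)

theorem lie_comm_of_charP_two {L : Type*} [LieRing L] [LieAlgebra F L] (x y : L) :
    ⁅x, y⁆ = ⁅y, x⁆ := by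
  rw [← lie_skew, neg_eq_self_of_charP_two F]

theorem LinearMap.IsAlt.eq_of_charP_two {N : Type*} [AddCommGroup M] [Module F M]
    [AddCommMonoid N] [Module F N] {B : N →ₗ[F] N →ₗ[F] M} (h : B.IsAlt) (x y : N) :
    B x y = B y x := by
  rw [← h.neg, neg_eq_self_of_charP_two F]

end CharTwo

section RestrictedCocycle

variable {F g M N : Type*} [CommRing F] [LieRing g] [LieAlgebra F g]
  [AddCommGroup M] [Module F M] [AddCommGroup N] [Module F N]

/-- A restricted 2-cocycle of `(g, sq)` with values in the trivial module `M`: `β` is the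
quadratic part and `α` its polarization. -/
structure IsRestrictedTwoCocycle (sq : g → g) (α : g →ₗ[F] g →ₗ[F] M) (β : g → M) : Prop where
  isAlt : α.IsAlt
  quad_smul : ∀ (a : F) (x : g), β (a • x) = a ^ 2 • β x
  quad_add : ∀ x y : g, β (x + y) = β x + β y + α x y
  jacobi : ∀ x y z : g, α x ⁅y, z⁆ + α y ⁅z, x⁆ + α z ⁅x, y⁆ = 0
  sq_lie : ∀ x y : g, α (sq x) y + α ⁅x, y⁆ x = 0

namespace IsRestrictedTwoCocycle

variable {sq : g → g} {α α' : g →ₗ[F] g →ₗ[F] M} {β β' : g → M}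

theorem compr₂ (h : IsRestrictedTwoCocycle sq α β) (f : M →ₗ[F] N) :
    IsRestrictedTwoCocycle sq (α.compr₂ f) (f ∘ β) where
  isAlt x := by simp [h.isAlt.self_eq_zero]
  quad_smul a x := by simp [h.quad_smul]
  quad_add x y := by simp [h.quad_add]
  jacobi x y z := by
    simp only [LinearMap.compr₂_apply]
    rw [← map_add, ← map_add, h.jacobi, map_zero]
  sq_lie x y := by
    simp only [LinearMap.compr₂_apply]
    rw [← map_add, h.sq_lie, map_zero]

theorem add (h : IsRestrictedTwoCocycle sq α β) (h' : IsRestrictedTwoCocycle sq α' β') :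
    IsRestrictedTwoCocycle sq (α + α') (β + β') where
  isAlt x := by simp [h.isAlt.self_eq_zero, h'.isAlt.self_eq_zero]
  quad_smul a x := by simp [h.quad_smul, h'.quad_smul]
  quad_add x y := by
    simp only [Pi.add_apply, LinearMap.add_apply, h.quad_add, h'.quad_add]
    abel
  jacobi x y z := by
    simp only [LinearMap.add_apply]
    linear_combination (norm := abel) h.jacobi x y z + h'.jacobi x y z
  sq_lie x y := by
    simp only [LinearMap.add_apply]
    linear_combination (norm := abel) h.sq_lie x y + h'.sq_lie x y

theorem derivation [CharP F 2] (h : IsRestrictedTwoCocycle sq α β) {D : g →ₗ[F] g}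
    (hD_lie : ∀ x y : g, D ⁅x, y⁆ = ⁅D x, y⁆ + ⁅x, D y⁆) (hD_sq : ∀ x : g, D (sq x) = ⁅x, D x⁆) :
    IsRestrictedTwoCocycle sq (α ∘ₗ D + α.compl₂ D) (fun x => α x (D x)) where
  isAlt x := by
    simp only [LinearMap.add_apply, LinearMap.coe_comp, Function.comp_apply,
      LinearMap.compl₂_apply, h.isAlt.eq_of_charP_two F (D x) x]
    exact add_self_eq_zero_of_charP_two F _
  quad_smul a x := by simp [smul_smul, pow_two]
  quad_add x y := by
    simp only [map_add, LinearMap.add_apply, LinearMap.coe_comp, Function.comp_apply,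
      LinearMap.compl₂_apply, h.isAlt.eq_of_charP_two F y (D x)]
    abel
  jacobi x y z := by
    simp only [LinearMap.add_apply, LinearMap.coe_comp, Function.comp_apply,
      LinearMap.compl₂_apply, hD_lie, map_add]
    linear_combination (norm := abel)
      h.jacobi (D x) y z + h.jacobi (D y) z x + h.jacobi (D z) x y
  sq_lie x y := by
    -- the leftover terms form the Jacobi-type identity for `y`, `x`, `D x`
    have hJ := h.jacobi y x (D x)
    rw [h.isAlt.eq_of_charP_two F y, h.isAlt.eq_of_charP_two F x, h.isAlt.eq_of_charP_two F (D x),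
      lie_comm_of_charP_two F y x] at hJ
    simp only [LinearMap.add_apply, LinearMap.coe_comp, Function.comp_apply,
      LinearMap.compl₂_apply, hD_sq, hD_lie, map_add]
    linear_combination (norm := abel) h.sq_lie x (D y) + hJ

end IsRestrictedTwoCocycle

end RestrictedCocycle

section CentralExtension

variable {F g gh : Type*} [CommRing F] [LieRing g] [LieAlgebra F g] [LieRing gh] [LieAlgebra F gh]

def bracketDefect (s : g →ₗ[F] gh) : g →ₗ[F] g →ₗ[F] gh :=
  LinearMap.mk₂ F (fun x y => ⁅s x, s y⁆ + s ⁅x, y⁆)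
    (fun x x' y => by simp only [map_add, add_lie]; abel)
    (fun a x y => by simp only [map_smul, smul_lie, smul_add])
    (fun x y y' => by simp only [map_add, lie_add]; abel)
    (fun a x y => by simp only [map_smul, lie_smul, smul_add])

def squareDefect (sqg : g → g) (sqgh : gh → gh) (s : g →ₗ[F] gh) (x : g) : gh :=
  sqgh (s x) + s (sqg x)

variable (s : g →ₗ[F] gh)

@[simp]
theorem bracketDefect_apply (x y : g) : bracketDefect s x y = ⁅s x, s y⁆ + s ⁅x, y⁆ := rfl

theorem bracketDefect_isAlt : (bracketDefect s).IsAlt := fun x => by simp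

theorem squareDefect_smul {sqg : g → g} {sqgh : gh → gh}
    (hsqg_smul : ∀ (a : F) (x : g), sqg (a • x) = a ^ 2 • sqg x)
    (hsqgh_smul : ∀ (a : F) (u : gh), sqgh (a • u) = a ^ 2 • sqgh u) (a : F) (x : g) :
    squareDefect sqg sqgh s (a • x) = a ^ 2 • squareDefect sqg sqgh s x := by
  simp only [squareDefect, map_smul, hsqg_smul, hsqgh_smul, smul_add]

theorem squareDefect_add {sqg : g → g} {sqgh : gh → gh}
    (hsqg_add : ∀ x y : g, sqg (x + y) = sqg x + sqg y + ⁅x, y⁆)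
    (hsqgh_add : ∀ u v : gh, sqgh (u + v) = sqgh u + sqgh v + ⁅u, v⁆) (x y : g) :
    squareDefect sqg sqgh s (x + y) =
      squareDefect sqg sqgh s x + squareDefect sqg sqgh s y + bracketDefect s x y := by
  simp only [squareDefect, bracketDefect_apply, map_add, hsqg_add, hsqgh_add]
  abel

variable [CharP F 2] (θ : gh →ₗ⁅F⁆ g) {s} (hs : ∀ x : g, θ (s x) = x)
include hs

theorem map_bracketDefect_eq_zero (x y : g) : θ (bracketDefect s x y) = 0 := by
  simp only [bracketDefect_apply, map_add, LieHom.map_lie, hs]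
  exact add_self_eq_zero_of_charP_two F _

theorem map_squareDefect_eq_zero {sqg : g → g} {sqgh : gh → gh}
    (hθsq : ∀ u : gh, θ (sqgh u) = sqg (θ u)) (x : g) :
    θ (squareDefect sqg sqgh s x) = 0 := by
  simp only [squareDefect, map_add, hθsq, hs]
  exact add_self_eq_zero_of_charP_two F _

variable (hcentral : ∀ u : gh, θ u = 0 → ∀ v : gh, ⁅u, v⁆ = 0)
include hcentral

theorem bracketDefect_lie_right (x y z : g) :
    bracketDefect s x ⁅y, z⁆ = ⁅s x, ⁅s y, s z⁆⁆ + s ⁅x, ⁅y, z⁆⁆ := by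
  have hs_lie : s ⁅y, z⁆ = bracketDefect s y z + ⁅s y, s z⁆ := by
    rw [bracketDefect_apply, add_comm, ← add_assoc, add_self_eq_zero_of_charP_two F, zero_add]
  rw [bracketDefect_apply, hs_lie, lie_add, lie_comm_of_charP_two F (s x),
    hcentral _ (map_bracketDefect_eq_zero θ hs y z), zero_add]

theorem bracketDefect_jacobi (x y z : g) :
    bracketDefect s x ⁅y, z⁆ + bracketDefect s y ⁅z, x⁆ + bracketDefect s z ⁅x, y⁆ = 0 := by
  have hs_jacobi : s ⁅x, ⁅y, z⁆⁆ + s ⁅y, ⁅z, x⁆⁆ + s ⁅z, ⁅x, y⁆⁆ = 0 := by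
    rw [← map_add, ← map_add, lie_jacobi, map_zero]
  simp only [bracketDefect_lie_right θ hs hcentral]
  linear_combination (norm := abel) lie_jacobi (s x) (s y) (s z) + hs_jacobi

theorem bracketDefect_sq_lie {sqg : g → g} {sqgh : gh → gh}
    (hsqg_ad : ∀ x y : g, ⁅sqg x, y⁆ = ⁅x, ⁅x, y⁆⁆)
    (hsqgh_ad : ∀ u v : gh, ⁅sqgh u, v⁆ = ⁅u, ⁅u, v⁆⁆)
    (hθsq : ∀ u : gh, θ (sqgh u) = sqg (θ u)) (x y : g) :
    bracketDefect s (sqg x) y + bracketDefect s ⁅x, y⁆ x = 0 := by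
  have hs_sq : s (sqg x) = squareDefect sqg sqgh s x + sqgh (s x) := by
    rw [squareDefect, add_comm, ← add_assoc, add_self_eq_zero_of_charP_two F, zero_add]
  rw [(bracketDefect_isAlt s).eq_of_charP_two F ⁅x, y⁆, bracketDefect_lie_right θ hs hcentral,
    bracketDefect_apply, hs_sq, add_lie, hcentral _ (map_squareDefect_eq_zero θ hs hθsq x),
    zero_add, hsqgh_ad, hsqg_ad]
  exact add_self_eq_zero_of_charP_two F _

theorem isRestrictedTwoCocycle_bracketDefect {sqg : g → g} {sqgh : gh → gh}
    (hsqg_ad : ∀ x y : g, ⁅sqg x, y⁆ = ⁅x, ⁅x, y⁆⁆)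
    (hsqg_smul : ∀ (a : F) (x : g), sqg (a • x) = a ^ 2 • sqg x)
    (hsqg_add : ∀ x y : g, sqg (x + y) = sqg x + sqg y + ⁅x, y⁆)
    (hsqgh_ad : ∀ u v : gh, ⁅sqgh u, v⁆ = ⁅u, ⁅u, v⁆⁆)
    (hsqgh_smul : ∀ (a : F) (u : gh), sqgh (a • u) = a ^ 2 • sqgh u)
    (hsqgh_add : ∀ u v : gh, sqgh (u + v) = sqgh u + sqgh v + ⁅u, v⁆)
    (hθsq : ∀ u : gh, θ (sqgh u) = sqg (θ u)) :
    IsRestrictedTwoCocycle sqg (bracketDefect s) (squareDefect sqg sqgh s) where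
  isAlt := bracketDefect_isAlt s
  quad_smul := squareDefect_smul s hsqg_smul hsqgh_smul
  quad_add := squareDefect_add s hsqg_add hsqgh_add
  jacobi := bracketDefect_jacobi θ hs hcentral
  sq_lie := bracketDefect_sq_lie θ hs hcentral hsqg_ad hsqgh_ad hθsq

end CentralExtension

theorem stmt15_general
    {F : Type*} [Field F] [CharP F 2]
    {g : Type*} [LieRing g] [LieAlgebra F g]
    {gh : Type*} [LieRing gh] [LieAlgebra F gh]
    -- restricted structure on g
    (sqg : g → g)
    (hsqg_ad : ∀ x y : g, ⁅sqg x, y⁆ = ⁅x, ⁅x, y⁆⁆)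
    (hsqg_smul : ∀ (a : F) (x : g), sqg (a • x) = a ^ 2 • sqg x)
    (hsqg_add : ∀ x y : g, sqg (x + y) = sqg x + sqg y + ⁅x, y⁆)
    -- restricted structure on ĝ
    (sqgh : gh → gh)
    (hsqgh_ad : ∀ u v : gh, ⁅sqgh u, v⁆ = ⁅u, ⁅u, v⁆⁆)
    (hsqgh_smul : ∀ (a : F) (u : gh), sqgh (a • u) = a ^ 2 • sqgh u)
    (hsqgh_add : ∀ u v : gh, sqgh (u + v) = sqgh u + sqgh v + ⁅u, v⁆)
    -- θ : ĝ → g is a central extension of restricted Lie algebras with kernel h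
    (θ : gh →ₗ⁅F⁆ g)
    (hθsq : ∀ u : gh, θ (sqgh u) = sqg (θ u))
    (hcentral : ∀ u : gh, θ u = 0 → ∀ v : gh, ⁅u, v⁆ = 0)
    -- a restricted derivation of g
    (Dg : g →ₗ[F] g)
    (hDg_br : ∀ x y : g, Dg ⁅x, y⁆ = ⁅Dg x, y⁆ + ⁅x, Dg y⁆)
    (hDg_sq : ∀ x : g, Dg (sqg x) = ⁅x, Dg x⁆)
    -- a linear map D_h : h → h on the kernel
    (Dh : gh →ₗ[F] gh)
    (hDh_ker : ∀ u : gh, θ u = 0 → θ (Dh u) = 0)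
    -- a section of θ
    (s : g →ₗ[F] gh)
    (hs : ∀ x : g, θ (s x) = x) :
    let ψ : g → g → gh := fun x y => ⁅s x, s y⁆ + s ⁅x, y⁆
    let ς : g → gh := fun x => sqgh (s x) + s (sqg x)
    let ObI : g → g → gh := fun x y => Dh (ψ x y) + ψ (Dg x) y + ψ x (Dg y)
    let ObII : g → gh := fun x => Dh (ς x) + ψ x (Dg x)
    -- (Ob_I, Ob_II) takes values in the kernel h:
    ((∀ x y : g, θ (ObI x y) = 0) ∧ (∀ x : g, θ (ObII x) = 0)) ∧
    -- Ob_I is alternating F-bilinear: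
    ((∀ (a : F) (x x' y : g), ObI (a • x + x') y = a • ObI x y + ObI x' y) ∧
     (∀ (a : F) (x y y' : g), ObI x (a • y + y') = a • ObI x y + ObI x y') ∧
     (∀ x : g, ObI x x = 0)) ∧
    -- Ob_II satisfies the 2-cochain conditions:
    ((∀ (a : F) (x : g), ObII (a • x) = a ^ 2 • ObII x) ∧
     (∀ x y : g, ObII (x + y) = ObII x + ObII y + ObI x y)) ∧
    -- and the 2-cocycle equations with trivial coefficients hold:
    ((∀ x y z : g, ObI x ⁅y, z⁆ + ObI y ⁅z, x⁆ + ObI z ⁅x, y⁆ = 0) ∧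
     (∀ x y : g, ObI (sqg x) y + ObI ⁅x, y⁆ x = 0)) := by
  intro ψ ς ObI ObII
  have hψς : IsRestrictedTwoCocycle sqg (bracketDefect s) (squareDefect sqg sqgh s) :=
    isRestrictedTwoCocycle_bracketDefect θ hs hcentral hsqg_ad hsqg_smul hsqg_add hsqgh_ad
      hsqgh_smul hsqgh_add hθsq
  obtain ⟨hOb_alt, hObII_smul, hObII_add, hOb_jacobi, hOb_sq_lie⟩ :=
    (hψς.compr₂ Dh).add (hψς.derivation hDg_br hDg_sq)
  set Ob :=
    (bracketDefect s).compr₂ Dh + (bracketDefect s ∘ₗ Dg + (bracketDefect s).compl₂ Dg)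
  have hObI : ∀ x y, ObI x y = Ob x y := fun x y => add_assoc _ _ _
  have hψ_ker : ∀ x y, θ (ψ x y) = 0 := map_bracketDefect_eq_zero θ hs
  have hς_ker : ∀ x, θ (ς x) = 0 := map_squareDefect_eq_zero θ hs hθsq
  refine ⟨⟨fun x y => ?_, fun x => ?_⟩,
    ⟨fun a x x' y => ?_, fun a x y y' => ?_, fun x => ?_⟩,
    ⟨hObII_smul, fun x y => ?_⟩, ⟨fun x y z => ?_, fun x y => ?_⟩⟩
  · simp only [ObI, map_add, hDh_ker _ (hψ_ker x y), hψ_ker, add_zero]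
  · simp only [ObII, map_add, hDh_ker _ (hς_ker x), hψ_ker, add_zero]
  · simp only [hObI, map_add, map_smul, LinearMap.add_apply, LinearMap.smul_apply]
  · simp only [hObI, map_add, map_smul]
  · rw [hObI, hOb_alt]
  · rw [hObI]; exact hObII_add x y
  · simpa only [hObI] using hOb_jacobi x y z
  · simpa only [hObI] using hOb_sq_lie x y

/-- for a central extension `θ : ĝ → g` of restricted Lie algebras with
kernel `h` (embedded in `ĝ`), a restricted derivation `D_g` of `g` and a linear map
`D_h` on the kernel, the obstruction cochain `(Ob_I, Ob_II)` built from a section `s` is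
a 2-cocycle of `(g,[2])` with values in the trivial module `h`.  The operator `D_h` is
modelled as a linear endomorphism `Dh` of `ĝ` preserving the kernel. -/
theorem stmt15
    {F : Type*} [Field F] [CharP F 2]
    {g : Type*} [LieRing g] [LieAlgebra F g]
    {gh : Type*} [LieRing gh] [LieAlgebra F gh]
    -- restricted structure on g
    (sqg : g → g)
    (hsqg_ad : ∀ x y : g, ⁅sqg x, y⁆ = ⁅x, ⁅x, y⁆⁆)
    (hsqg_smul : ∀ (a : F) (x : g), sqg (a • x) = a ^ 2 • sqg x)
    (hsqg_add : ∀ x y : g, sqg (x + y) = sqg x + sqg y + ⁅x, y⁆)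
    -- restricted structure on ĝ
    (sqgh : gh → gh)
    (hsqgh_ad : ∀ u v : gh, ⁅sqgh u, v⁆ = ⁅u, ⁅u, v⁆⁆)
    (hsqgh_smul : ∀ (a : F) (u : gh), sqgh (a • u) = a ^ 2 • sqgh u)
    (hsqgh_add : ∀ u v : gh, sqgh (u + v) = sqgh u + sqgh v + ⁅u, v⁆)
    -- θ : ĝ → g is a central extension of restricted Lie algebras with kernel h
    (θ : gh →ₗ⁅F⁆ g)
    (hθsurj : Function.Surjective θ)
    (hθsq : ∀ u : gh, θ (sqgh u) = sqg (θ u))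
    (hcentral : ∀ u : gh, θ u = 0 → ∀ v : gh, ⁅u, v⁆ = 0)
    (hker_sq : ∀ u : gh, θ u = 0 → sqgh u = 0)
    -- a restricted derivation of g
    (Dg : g →ₗ[F] g)
    (hDg_br : ∀ x y : g, Dg ⁅x, y⁆ = ⁅Dg x, y⁆ + ⁅x, Dg y⁆)
    (hDg_sq : ∀ x : g, Dg (sqg x) = ⁅x, Dg x⁆)
    -- a linear map D_h : h → h on the kernel
    (Dh : gh →ₗ[F] gh)
    (hDh_ker : ∀ u : gh, θ u = 0 → θ (Dh u) = 0)
    -- a section of θ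
    (s : g →ₗ[F] gh)
    (hs : ∀ x : g, θ (s x) = x) :
    let ψ : g → g → gh := fun x y => ⁅s x, s y⁆ + s ⁅x, y⁆
    let ς : g → gh := fun x => sqgh (s x) + s (sqg x)
    let ObI : g → g → gh := fun x y => Dh (ψ x y) + ψ (Dg x) y + ψ x (Dg y)
    let ObII : g → gh := fun x => Dh (ς x) + ψ x (Dg x)
    -- (Ob_I, Ob_II) takes values in the kernel h:
    ((∀ x y : g, θ (ObI x y) = 0) ∧ (∀ x : g, θ (ObII x) = 0)) ∧
    -- Ob_I is alternating F-bilinear: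
    ((∀ (a : F) (x x' y : g), ObI (a • x + x') y = a • ObI x y + ObI x' y) ∧
     (∀ (a : F) (x y y' : g), ObI x (a • y + y') = a • ObI x y + ObI x y') ∧
     (∀ x : g, ObI x x = 0)) ∧
    -- Ob_II satisfies the 2-cochain conditions:
    ((∀ (a : F) (x : g), ObII (a • x) = a ^ 2 • ObII x) ∧
     (∀ x y : g, ObII (x + y) = ObII x + ObII y + ObI x y)) ∧
    -- and the 2-cocycle equations with trivial coefficients hold:
    ((∀ x y z : g, ObI x ⁅y, z⁆ + ObI y ⁅z, x⁆ + ObI z ⁅x, y⁆ = 0) ∧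
     (∀ x y : g, ObI (sqg x) y + ObI ⁅x, y⁆ x = 0)) :=
  stmt15_general sqg hsqg_ad hsqg_smul hsqg_add sqgh hsqgh_ad hsqgh_smul hsqgh_add θ hθsq hcentral
    Dg hDg_br hDg_sq Dh hDh_ker s hs
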